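/- (Theorem 1, part ii) Under Assumptions 1 and 2, let the GTT stepsize satisfy 0 < γ < 2/L, so that ρ := max{|1−γm|, |1−γL|} < 1, and define σ := 1 + h·(C₀C₁/m² + C₂/m). If the sampling period satisfies ρ^τ·σ < 1, i.e. h < (C₀C₁/m² + C₂/m)⁻¹·(ρ^{−τ} − 1), then the GTT iterates satisfy, for every k ≥ 0: ‖x_k − x*(t_k)‖ ≤ (ρ^τσ)^k·‖x₀ − x*(t₀)‖ + ρ^τ·(h²/2)·(C₀²C₁/m³ + 2C₀C₂/m² + C₃/m)·(1 − (ρ^τσ)^k)/(1 − ρ^τσ). -/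

import Mathlib

/-!
Each GTT step is a prediction followed by `τ` gradient steps at time `t + h`.

The prediction map is `σ`-Lipschitz (by `A⁻¹ - B⁻¹ = A⁻¹ (B - A) B⁻¹`, the map
`x ↦ [∇ₓₓ f(x;t)]⁻¹` is `C₁/m²`-Lipschitz), and it sends `x*(t)` to within
`h²/2 · (C₀²C₁/m³ + 2C₀C₂/m² + C₃/m)` of `x*(t + h)`: at the predicted point, `∇ₓ f(·; t + h)` is
a sum of three second-order Taylor remainders, and strong monotonicity turns a gradient bound
into a distance bound at the cost of a factor `1/m`.

A gradient step has derivative `I - γ ∇ₓₓ f`, a symmetric operator with spectrum in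
`[1 - γL, 1 - γm]`, so it is `ρ`-Lipschitz and fixes `x*(t + h)`. Hence the tracking error obeys
`e_{k+1} ≤ ρ^τ σ e_k + ρ^τ h²/2 · (…)`, and unrolling this linear recursion gives the bound.
-/

noncomputable section

/-- The setting of a time-varying, smooth, strongly convex optimization problem
`min_{x ∈ ℝⁿ} f(x;t)`, bundling the objective `f`, its derivatives, the Hessian
inverse, the optimal trajectory `x*(t)`, and Assumptions 1 and 2 of the paper. -/
structure TVOpt (n : ℕ) where
  /-- the objective `f(x;t)` -/
  f : EuclideanSpace ℝ (Fin n) → ℝ → ℝ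
  /-- the gradient `∇ₓ f(x;t)` -/
  grad : EuclideanSpace ℝ (Fin n) → ℝ → EuclideanSpace ℝ (Fin n)
  /-- the Hessian `∇ₓₓ f(x;t)` -/
  hess : EuclideanSpace ℝ (Fin n) → ℝ →
    EuclideanSpace ℝ (Fin n) →L[ℝ] EuclideanSpace ℝ (Fin n)
  /-- the Hessian inverse `[∇ₓₓ f(x;t)]⁻¹` -/
  hessInv : EuclideanSpace ℝ (Fin n) → ℝ →
    EuclideanSpace ℝ (Fin n) →L[ℝ] EuclideanSpace ℝ (Fin n)
  /-- the mixed partial derivative `∇_{tx} f(x;t)` -/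
  dtgrad : EuclideanSpace ℝ (Fin n) → ℝ → EuclideanSpace ℝ (Fin n)
  /-- the third derivative tensor `∇ₓₓₓ f(x;t)` -/
  d3 : EuclideanSpace ℝ (Fin n) → ℝ →
    EuclideanSpace ℝ (Fin n) →L[ℝ] EuclideanSpace ℝ (Fin n) →L[ℝ] EuclideanSpace ℝ (Fin n)
  /-- the time derivative of the Hessian `∇_{xtx} f(x;t)` -/
  dthess : EuclideanSpace ℝ (Fin n) → ℝ →
    EuclideanSpace ℝ (Fin n) →L[ℝ] EuclideanSpace ℝ (Fin n)
  /-- the second time derivative of the gradient `∇_{ttx} f(x;t)` -/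
  dttgrad : EuclideanSpace ℝ (Fin n) → ℝ → EuclideanSpace ℝ (Fin n)
  /-- the optimal trajectory `x*(t)` -/
  xstar : ℝ → EuclideanSpace ℝ (Fin n)
  /-- strong convexity constant -/
  m : ℝ
  /-- Hessian norm bound (gradient Lipschitz constant) -/
  L : ℝ
  C0 : ℝ
  C1 : ℝ
  C2 : ℝ
  C3 : ℝ
  m_pos : 0 < m
  grad_spec : ∀ (x : EuclideanSpace ℝ (Fin n)) (t : ℝ), HasGradientAt (fun y => f y t) (grad x t) x
  hess_spec : ∀ (x : EuclideanSpace ℝ (Fin n)) (t : ℝ), HasFDerivAt (fun y => grad y t) (hess x t) x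
  dtgrad_spec : ∀ (x : EuclideanSpace ℝ (Fin n)) (t : ℝ), HasDerivAt (fun s => grad x s) (dtgrad x t) t
  d3_spec : ∀ (x : EuclideanSpace ℝ (Fin n)) (t : ℝ), HasFDerivAt (fun y => hess y t) (d3 x t) x
  dthess_spec : ∀ (x : EuclideanSpace ℝ (Fin n)) (t : ℝ), HasDerivAt (fun s => hess x s) (dthess x t) t
  dttgrad_spec : ∀ (x : EuclideanSpace ℝ (Fin n)) (t : ℝ), HasDerivAt (fun s => dtgrad x s) (dttgrad x t) t
  /-- Assumption 1: `∇ₓₓ f(x;t) ⪰ m·I` uniformly in `x` and `t`. -/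
  strong_convex : ∀ (x : EuclideanSpace ℝ (Fin n)) (t : ℝ) (v : EuclideanSpace ℝ (Fin n)),
    m * ‖v‖ ^ 2 ≤ @inner ℝ _ _ v (hess x t v)
  hessInv_left : ∀ (x : EuclideanSpace ℝ (Fin n)) (t : ℝ), ContinuousLinearMap.comp (hessInv x t) (hess x t) =
    ContinuousLinearMap.id ℝ (EuclideanSpace ℝ (Fin n))
  hessInv_right : ∀ (x : EuclideanSpace ℝ (Fin n)) (t : ℝ), ContinuousLinearMap.comp (hess x t) (hessInv x t) =
    ContinuousLinearMap.id ℝ (EuclideanSpace ℝ (Fin n))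
  /-- Assumption 2: bounded derivatives, uniformly in `x` and `t`. -/
  hess_bound : ∀ (x : EuclideanSpace ℝ (Fin n)) (t : ℝ), ‖hess x t‖ ≤ L
  dtgrad_bound : ∀ (x : EuclideanSpace ℝ (Fin n)) (t : ℝ), ‖dtgrad x t‖ ≤ C0
  d3_bound : ∀ (x : EuclideanSpace ℝ (Fin n)) (t : ℝ), ‖d3 x t‖ ≤ C1
  dthess_bound : ∀ (x : EuclideanSpace ℝ (Fin n)) (t : ℝ), ‖dthess x t‖ ≤ C2
  dttgrad_bound : ∀ (x : EuclideanSpace ℝ (Fin n)) (t : ℝ), ‖dttgrad x t‖ ≤ C3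
  /-- `x*(t)` minimizes `f(·;t)` -/
  xstar_min : ∀ t : ℝ, IsMinOn (fun x => f x t) Set.univ (xstar t)
  /-- equivalently, `∇ₓ f(x*(t);t) = 0` -/
  xstar_grad : ∀ t : ℝ, grad (xstar t) t = 0

open Set InnerProductSpace

section MeanValue

variable {E F : Type*} [NormedAddCommGroup E] [NormedSpace ℝ E]
  [NormedAddCommGroup F] [NormedSpace ℝ F]

theorem norm_image_sub_le_of_forall_norm_hasFDerivAt_le {f : E → F} {f' : E → E →L[ℝ] F}
    {C : ℝ} (hf : ∀ x, HasFDerivAt f (f' x) x) (hC : ∀ x, ‖f' x‖ ≤ C) (a b : E) :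
    ‖f a - f b‖ ≤ C * ‖a - b‖ :=
  convex_univ.norm_image_sub_le_of_norm_hasFDerivWithin_le
    (fun z _ => (hf z).hasFDerivWithinAt) (fun z _ => hC z) trivial trivial

theorem norm_image_sub_le_of_forall_norm_hasDerivAt_le {f f' : ℝ → F} {C : ℝ}
    (hf : ∀ s, HasDerivAt f (f' s) s) (hC : ∀ s, ‖f' s‖ ≤ C) (s u : ℝ) :
    ‖f s - f u‖ ≤ C * |s - u| :=
  convex_univ.norm_image_sub_le_of_norm_hasDerivWithin_le
    (fun z _ => (hf z).hasDerivWithinAt) (fun z _ => hC z) trivial trivial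

theorem norm_image_one_sub_image_zero_le_half {f f' : ℝ → F} {K : ℝ}
    (hf : ∀ s, HasDerivAt f (f' s) s) (hK : ∀ s ∈ Icc (0 : ℝ) 1, ‖f' s‖ ≤ K * s) :
    ‖f 1 - f 0‖ ≤ K / 2 := by
  have hB (s : ℝ) : HasDerivAt (fun s : ℝ => K * s ^ 2 / 2) (K * s) s :=
    (((hasDerivAt_pow 2 s).const_mul K).div_const 2).congr_deriv (by norm_num; ring)
  have key := image_norm_le_of_norm_deriv_right_le_deriv_boundary
    (f := fun s => f s - f 0) (B := fun s => K * s ^ 2 / 2)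
    (fun s _ => ((hf s).sub_const (f 0)).continuousAt.continuousWithinAt)
    (fun s _ => ((hf s).sub_const (f 0)).hasDerivWithinAt)
    (by simp) hB (fun s hs => hK s (Ico_subset_Icc_self hs)) (right_mem_Icc.2 zero_le_one)
  simpa using key

theorem norm_image_sub_sub_fderiv_le {f : E → F} {f' : E → E →L[ℝ] F} {K : ℝ}
    (hf : ∀ x, HasFDerivAt f (f' x) x) (hK : ∀ x y, ‖f' x - f' y‖ ≤ K * ‖x - y‖) (a b : E) :
    ‖f a - f b - f' b (a - b)‖ ≤ K / 2 * ‖a - b‖ ^ 2 := by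
  set d := a - b
  have hpath (s : ℝ) : HasDerivAt (fun s : ℝ => b + s • d) d s := by
    simpa using ((hasDerivAt_id s).smul_const d).const_add b
  have hφ (s : ℝ) : HasDerivAt (fun s : ℝ => f (b + s • d) - s • f' b d)
      (f' (b + s • d) d - f' b d) s :=
    ((hf _).comp_hasDerivAt s (hpath s)).sub (by simpa using (hasDerivAt_id s).smul_const (f' b d))
  have hbound (s : ℝ) (hs : s ∈ Icc (0 : ℝ) 1) :
      ‖f' (b + s • d) d - f' b d‖ ≤ K * ‖d‖ ^ 2 * s := by
    calc ‖f' (b + s • d) d - f' b d‖ ≤ ‖f' (b + s • d) - f' b‖ * ‖d‖ := by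
          rw [← sub_apply]; exact ContinuousLinearMap.le_opNorm _ _
      _ ≤ K * ‖b + s • d - b‖ * ‖d‖ := by gcongr; exact hK _ _
      _ = K * ‖d‖ ^ 2 * s := by
          rw [add_sub_cancel_left, norm_smul, Real.norm_of_nonneg hs.1]; ring
  have key := norm_image_one_sub_image_zero_le_half hφ hbound
  have hb : b + d = a := add_sub_cancel b a
  simp only [one_smul, zero_smul, add_zero, hb, sub_zero] at key
  rw [sub_right_comm]
  linarith

theorem norm_image_add_sub_sub_smul_deriv_le {f f' : ℝ → F} {K : ℝ}
    (hf : ∀ s, HasDerivAt f (f' s) s) (hK : ∀ s u, ‖f' s - f' u‖ ≤ K * |s - u|) (t h : ℝ) :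
    ‖f (t + h) - f t - h • f' t‖ ≤ K / 2 * h ^ 2 := by
  have hsub (v w : F) : ContinuousLinearMap.toSpanSingleton ℝ v -
      ContinuousLinearMap.toSpanSingleton ℝ w = ContinuousLinearMap.toSpanSingleton ℝ (v - w) := by
    ext; simp
  have key := norm_image_sub_sub_fderiv_le (fun s => (hf s).hasFDerivAt) (K := K)
    (fun s u => by
      rw [hsub, ContinuousLinearMap.norm_toSpanSingleton, Real.norm_eq_abs]
      exact hK s u) (t + h) t
  simpa [Real.norm_eq_abs] using key

end MeanValue

section InnerProduct

variable {E : Type*} [NormedAddCommGroup E] [InnerProductSpace ℝ E]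

theorem mul_norm_le_norm_of_mul_sq_le_inner {m : ℝ} {v w : E} (h : m * ‖v‖ ^ 2 ≤ ⟪v, w⟫_ℝ) :
    m * ‖v‖ ≤ ‖w‖ := by
  rcases (norm_nonneg v).eq_or_lt with hv | hv
  · simp [← hv]
  · refine le_of_mul_le_mul_left ?_ hv
    nlinarith [real_inner_le_norm v w]

theorem mul_sq_le_inner_sub_of_hasFDerivAt {g : E → E} {H : E → E →L[ℝ] E} {m : ℝ}
    (hg : ∀ z, HasFDerivAt g (H z) z) (hm : ∀ z v, m * ‖v‖ ^ 2 ≤ ⟪v, H z v⟫_ℝ) (a b : E) :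
    m * ‖a - b‖ ^ 2 ≤ ⟪a - b, g a - g b⟫_ℝ := by
  set d := a - b
  have hφ (s : ℝ) : HasDerivAt (fun s : ℝ => ⟪d, g (b + s • d)⟫_ℝ - s * (m * ‖d‖ ^ 2))
      (⟪d, H (b + s • d) d⟫_ℝ - m * ‖d‖ ^ 2) s := by
    have hpath : HasDerivAt (fun s : ℝ => b + s • d) d s := by
      simpa using ((hasDerivAt_id s).smul_const d).const_add b
    have hinner : HasDerivAt (fun s : ℝ => ⟪d, g (b + s • d)⟫_ℝ) ⟪d, H (b + s • d) d⟫_ℝ s :=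
      (innerSL ℝ d).hasFDerivAt.comp_hasDerivAt s ((hg _).comp_hasDerivAt s hpath)
    exact (hinner.sub ((hasDerivAt_id s).mul_const (m * ‖d‖ ^ 2))).congr_deriv (by simp)
  have hmono : Monotone fun s : ℝ => ⟪d, g (b + s • d)⟫_ℝ - s * (m * ‖d‖ ^ 2) :=
    monotone_of_deriv_nonneg (fun s => (hφ s).differentiableAt)
      (fun s => by rw [(hφ s).deriv]; linarith [hm (b + s • d) d])
  have h01 := hmono zero_le_one
  have hb : b + d = a := add_sub_cancel b a
  simp only [zero_smul, add_zero, one_smul, zero_mul, sub_zero, one_mul, hb] at h01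
  rw [inner_sub_right]
  linarith

theorem ContinuousLinearMap.opNorm_le_of_isSymmetric_of_abs_inner_le {T : E →L[ℝ] E}
    (hT : (T : E →ₗ[ℝ] E).IsSymmetric) {r : ℝ} (hr : 0 ≤ r)
    (h : ∀ x, |⟪T x, x⟫_ℝ| ≤ r * ‖x‖ ^ 2) : ‖T‖ ≤ r := by
  rw [T.norm_eq_iSup_rayleighQuotient hT]
  refine ciSup_le fun x => ?_
  rcases (norm_nonneg x).eq_or_lt with hx | hx
  · obtain rfl := norm_eq_zero.1 hx.symm
    simpa using hr
  · have hx2 : 0 < ‖x‖ ^ 2 := by positivity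
    rw [rayleighQuotient, reApplyInnerSelf_apply, RCLike.re_to_real, abs_div, abs_of_pos hx2,
      div_le_iff₀ hx2]
    exact h x

theorem norm_id_sub_smul_le {A : E →L[ℝ] E} (hA : (A : E →ₗ[ℝ] E).IsSymmetric) {m L γ : ℝ}
    (hγ : 0 ≤ γ) (hm : ∀ v, m * ‖v‖ ^ 2 ≤ ⟪v, A v⟫_ℝ) (hL : ‖A‖ ≤ L) :
    ‖ContinuousLinearMap.id ℝ E - γ • A‖ ≤ max |1 - γ * m| |1 - γ * L| := by
  refine ContinuousLinearMap.opNorm_le_of_isSymmetric_of_abs_inner_le ?_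
    ((abs_nonneg _).trans (le_max_left _ _)) fun v => ?_
  · intro v w
    simp only [ContinuousLinearMap.toLinearMap_sub, ContinuousLinearMap.toLinearMap_smul,
      ContinuousLinearMap.coe_id, LinearMap.sub_apply, LinearMap.smul_apply, LinearMap.id_apply,
      inner_sub_left, inner_sub_right, real_inner_smul_left, real_inner_smul_right, hA v w]
  have hlow := hm v
  have hup : ⟪v, A v⟫_ℝ ≤ L * ‖v‖ ^ 2 := by
    calc ⟪v, A v⟫_ℝ ≤ ‖v‖ * (‖A‖ * ‖v‖) :=
          (real_inner_le_norm _ _).trans (by gcongr; exact A.le_opNorm v)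
      _ ≤ L * ‖v‖ ^ 2 := by nlinarith [norm_nonneg v]
  have hq : ⟪(ContinuousLinearMap.id ℝ E - γ • A) v, v⟫_ℝ = ‖v‖ ^ 2 - γ * ⟪v, A v⟫_ℝ := by
    simp [inner_sub_left, inner_smul_left, real_inner_comm]
  have h1 := le_max_left |1 - γ * m| |1 - γ * L|
  have h2 := le_max_right |1 - γ * m| |1 - γ * L|
  rw [hq, abs_le]
  constructor
  · nlinarith [neg_abs_le (1 - γ * L), mul_le_mul_of_nonneg_left hup hγ, sq_nonneg ‖v‖]
  · nlinarith [le_abs_self (1 - γ * m), mul_le_mul_of_nonneg_left hlow hγ, sq_nonneg ‖v‖]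

theorem isSymmetric_of_hasGradientAt_of_hasFDerivAt [CompleteSpace E] {f : E → ℝ} {g : E → E}
    {H : E → E →L[ℝ] E} (hf : ∀ x, HasGradientAt f (g x) x) (hg : ∀ x, HasFDerivAt g (H x) x)
    (x : E) : (H x : E →ₗ[ℝ] E).IsSymmetric := by
  intro v w
  have hsymm := second_derivative_symmetric (fun y => (hf y).hasFDerivAt)
    ((toDual ℝ E).toContinuousLinearEquiv.toContinuousLinearMap.hasFDerivAt.comp x (hg x)) v w
  simpa [real_inner_comm] using hsymm

theorem norm_sub_smul_sub_sub_smul_le {g : E → E} {H : E → E →L[ℝ] E} {m L γ : ℝ}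
    (hg : ∀ z, HasFDerivAt g (H z) z) (hsymm : ∀ z, (H z : E →ₗ[ℝ] E).IsSymmetric)
    (hm : ∀ z v, m * ‖v‖ ^ 2 ≤ ⟪v, H z v⟫_ℝ) (hL : ∀ z, ‖H z‖ ≤ L) (hγ : 0 ≤ γ) (a b : E) :
    ‖(a - γ • g a) - (b - γ • g b)‖ ≤ max |1 - γ * m| |1 - γ * L| * ‖a - b‖ :=
  norm_image_sub_le_of_forall_norm_hasFDerivAt_le
    (fun z => (hasFDerivAt_id z).sub ((hg z).const_smul γ))
    (fun z => norm_id_sub_smul_le (hsymm z) hγ (hm z) (hL z)) a b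

end InnerProduct

theorem max_abs_one_sub_mul_lt_one {m L γ : ℝ} (hm : 0 < m) (hmL : m ≤ L) (hγ : 0 < γ)
    (hγL : γ < 2 / L) : max |1 - γ * m| |1 - γ * L| < 1 := by
  have hL : 0 < L := hm.trans_le hmL
  have hγL' : γ * L < 2 := (lt_div_iff₀ hL).1 hγL
  have hγm : γ * m ≤ γ * L := by gcongr
  apply max_lt <;> rw [abs_lt] <;> constructor <;> nlinarith [mul_pos hγ hm]

theorem le_pow_mul_add_geom_of_le_mul_add {e : ℕ → ℝ} {q c : ℝ} (hq : 0 ≤ q) (hq1 : q ≠ 1)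
    (he : ∀ k, e (k + 1) ≤ q * e k + c) (k : ℕ) :
    e k ≤ q ^ k * e 0 + c * ((1 - q ^ k) / (1 - q)) := by
  induction k with
  | zero => simp
  | succ k ih =>
    have h1q : 1 - q ≠ 0 := sub_ne_zero.2 hq1.symm
    calc e (k + 1) ≤ q * (q ^ k * e 0 + c * ((1 - q ^ k) / (1 - q))) + c :=
          (he k).trans (by gcongr)
      _ = q ^ (k + 1) * e 0 + c * ((1 - q ^ (k + 1)) / (1 - q)) := by
          field_simp
          ring

namespace TVOpt

variable {n : ℕ} (P : TVOpt n)

local notation "E" => EuclideanSpace ℝ (Fin n)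

def predict (h t : ℝ) (x : E) : E := x - h • P.hessInv x t (P.dtgrad x t)

def correct (γ t : ℝ) (y : E) : E := y - γ • P.grad y t

theorem C0_nonneg : 0 ≤ P.C0 := (norm_nonneg (P.dtgrad 0 0)).trans (P.dtgrad_bound 0 0)
theorem C1_nonneg : 0 ≤ P.C1 := (norm_nonneg (P.d3 0 0)).trans (P.d3_bound 0 0)
theorem C2_nonneg : 0 ≤ P.C2 := (norm_nonneg (P.dthess 0 0)).trans (P.dthess_bound 0 0)

theorem m_le_L (hn : 0 < n) : P.m ≤ P.L := by
  set u : E := EuclideanSpace.single ⟨0, hn⟩ 1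
  have hu : ‖u‖ = 1 := by simp [u]
  have hlow := P.strong_convex 0 0 u
  have hup : ⟪u, P.hess 0 0 u⟫_ℝ ≤ ‖P.hess 0 0‖ :=
    (real_inner_le_norm _ _).trans (by simpa [hu] using (P.hess 0 0).le_opNorm u)
  rw [hu] at hlow
  linarith [P.hess_bound 0 0]

theorem hess_isSymmetric (x : E) (t : ℝ) : (P.hess x t : E →ₗ[ℝ] E).IsSymmetric :=
  isSymmetric_of_hasGradientAt_of_hasFDerivAt (fun y => P.grad_spec y t)
    (fun y => P.hess_spec y t) x

theorem norm_hess_sub_hess_space_le (t : ℝ) (a b : E) :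
    ‖P.hess a t - P.hess b t‖ ≤ P.C1 * ‖a - b‖ :=
  norm_image_sub_le_of_forall_norm_hasFDerivAt_le (fun z => P.d3_spec z t)
    (fun z => P.d3_bound z t) a b

theorem norm_hess_sub_hess_time_le (x : E) (s u : ℝ) :
    ‖P.hess x s - P.hess x u‖ ≤ P.C2 * |s - u| :=
  norm_image_sub_le_of_forall_norm_hasDerivAt_le (P.dthess_spec x) (P.dthess_bound x) s u

theorem norm_dtgrad_sub_dtgrad_time_le (x : E) (s u : ℝ) :
    ‖P.dtgrad x s - P.dtgrad x u‖ ≤ P.C3 * |s - u| :=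
  norm_image_sub_le_of_forall_norm_hasDerivAt_le (P.dttgrad_spec x) (P.dttgrad_bound x) s u

/-- `∇_{tx} f(a;t) - ∇_{tx} f(b;t)` is the time derivative of `∇ₓ f(a;·) - ∇ₓ f(b;·)`, which is
`C₂ ‖a - b‖`-Lipschitz by the mean value inequality in `x` applied to `∇ₓ f(·;s) - ∇ₓ f(·;u)`. -/
theorem norm_dtgrad_sub_dtgrad_space_le (t : ℝ) (a b : E) :
    ‖P.dtgrad a t - P.dtgrad b t‖ ≤ P.C2 * ‖a - b‖ := by
  refine ((P.dtgrad_spec a t).sub (P.dtgrad_spec b t)).le_of_lip' (by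
    have := P.C2_nonneg; positivity) (Filter.Eventually.of_forall fun s => ?_)
  have hlip := norm_image_sub_le_of_forall_norm_hasFDerivAt_le
    (fun z => (P.hess_spec z s).sub (P.hess_spec z t))
    (fun z => P.norm_hess_sub_hess_time_le z s t) a b
  calc ‖(P.grad a s - P.grad b s) - (P.grad a t - P.grad b t)‖
      = ‖(P.grad a s - P.grad a t) - (P.grad b s - P.grad b t)‖ := by abel_nf
    _ ≤ P.C2 * |s - t| * ‖a - b‖ := hlip
    _ = P.C2 * ‖a - b‖ * ‖s - t‖ := by rw [Real.norm_eq_abs]; ring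

theorem hess_hessInv_apply (x : E) (t : ℝ) (w : E) : P.hess x t (P.hessInv x t w) = w :=
  congrArg (· w) (P.hessInv_right x t)

theorem hessInv_hess_apply (x : E) (t : ℝ) (v : E) : P.hessInv x t (P.hess x t v) = v :=
  congrArg (· v) (P.hessInv_left x t)

theorem norm_hessInv_le (x : E) (t : ℝ) : ‖P.hessInv x t‖ ≤ P.m⁻¹ := by
  refine ContinuousLinearMap.opNorm_le_bound _ (inv_nonneg.2 P.m_pos.le) fun w => ?_
  rw [inv_mul_eq_div, le_div_iff₀' P.m_pos]
  have hcoer := P.strong_convex x t (P.hessInv x t w)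
  rw [P.hess_hessInv_apply] at hcoer
  exact mul_norm_le_norm_of_mul_sq_le_inner hcoer

theorem norm_hessInv_sub_hessInv_le (t : ℝ) (a b : E) :
    ‖P.hessInv a t - P.hessInv b t‖ ≤ P.C1 / P.m ^ 2 * ‖a - b‖ := by
  have hres : P.hessInv a t - P.hessInv b t =
      (P.hessInv a t).comp ((P.hess b t - P.hess a t).comp (P.hessInv b t)) := by
    ext1 w
    simp [P.hess_hessInv_apply, P.hessInv_hess_apply]
  calc ‖P.hessInv a t - P.hessInv b t‖
      ≤ ‖P.hessInv a t‖ * (‖P.hess b t - P.hess a t‖ * ‖P.hessInv b t‖) := by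
        rw [hres]
        exact (ContinuousLinearMap.opNorm_comp_le _ _).trans
          (by gcongr; exact ContinuousLinearMap.opNorm_comp_le _ _)
    _ ≤ P.m⁻¹ * (P.C1 * ‖b - a‖ * P.m⁻¹) := by
        have := P.C1_nonneg
        have := inv_nonneg.2 P.m_pos.le
        gcongr
        exacts [P.norm_hessInv_le a t, P.norm_hess_sub_hess_space_le t b a, P.norm_hessInv_le b t]
    _ = P.C1 / P.m ^ 2 * ‖a - b‖ := by rw [norm_sub_rev]; field_simp

theorem mul_norm_sub_xstar_le (a : E) (t : ℝ) : P.m * ‖a - P.xstar t‖ ≤ ‖P.grad a t‖ := by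
  have hmono := mul_sq_le_inner_sub_of_hasFDerivAt (fun z => P.hess_spec z t)
    (fun z v => P.strong_convex z t v) a (P.xstar t)
  rw [P.xstar_grad, sub_zero] at hmono
  exact mul_norm_le_norm_of_mul_sq_le_inner hmono

theorem norm_predict_sub_predict_le {h : ℝ} (hh : 0 ≤ h) (t : ℝ) (a b : E) :
    ‖P.predict h t a - P.predict h t b‖ ≤
      (1 + h * (P.C0 * P.C1 / P.m ^ 2 + P.C2 / P.m)) * ‖a - b‖ := by
  have hdir : ‖P.hessInv a t (P.dtgrad a t) - P.hessInv b t (P.dtgrad b t)‖ ≤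
      (P.C0 * P.C1 / P.m ^ 2 + P.C2 / P.m) * ‖a - b‖ := by
    have hsplit : P.hessInv a t (P.dtgrad a t) - P.hessInv b t (P.dtgrad b t) =
        P.hessInv a t (P.dtgrad a t - P.dtgrad b t) +
          (P.hessInv a t - P.hessInv b t) (P.dtgrad b t) := by
      simp only [map_sub, sub_apply]; abel
    calc ‖P.hessInv a t (P.dtgrad a t) - P.hessInv b t (P.dtgrad b t)‖
        ≤ ‖P.hessInv a t‖ * ‖P.dtgrad a t - P.dtgrad b t‖ +
            ‖P.hessInv a t - P.hessInv b t‖ * ‖P.dtgrad b t‖ := by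
          rw [hsplit]
          exact (norm_add_le _ _).trans (add_le_add (ContinuousLinearMap.le_opNorm _ _)
            (ContinuousLinearMap.le_opNorm _ _))
      _ ≤ P.m⁻¹ * (P.C2 * ‖a - b‖) + P.C1 / P.m ^ 2 * ‖a - b‖ * P.C0 := by
          have := P.C1_nonneg
          exact add_le_add
            (mul_le_mul (P.norm_hessInv_le a t) (P.norm_dtgrad_sub_dtgrad_space_le t a b)
              (norm_nonneg _) (inv_nonneg.2 P.m_pos.le))
            (mul_le_mul (P.norm_hessInv_sub_hessInv_le t a b) (P.dtgrad_bound b t)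
              (norm_nonneg _) (by positivity))
      _ = (P.C0 * P.C1 / P.m ^ 2 + P.C2 / P.m) * ‖a - b‖ := by ring
  calc ‖P.predict h t a - P.predict h t b‖
      = ‖(a - b) - h • (P.hessInv a t (P.dtgrad a t) - P.hessInv b t (P.dtgrad b t))‖ := by
        rw [predict, predict, smul_sub]; abel_nf
    _ ≤ ‖a - b‖ + h * ((P.C0 * P.C1 / P.m ^ 2 + P.C2 / P.m) * ‖a - b‖) := by
        refine (norm_sub_le _ _).trans ?_
        rw [norm_smul, Real.norm_of_nonneg hh]
        gcongr
    _ = (1 + h * (P.C0 * P.C1 / P.m ^ 2 + P.C2 / P.m)) * ‖a - b‖ := by ring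

theorem norm_predict_sub_self_le {h : ℝ} (hh : 0 ≤ h) (t : ℝ) (x : E) :
    ‖P.predict h t x - x‖ ≤ h * (P.C0 / P.m) := by
  rw [predict, sub_sub_cancel_left, norm_neg, norm_smul, Real.norm_of_nonneg hh, ← inv_mul_eq_div]
  gcongr
  exact (P.hessInv x t).le_of_opNorm_le (P.norm_hessInv_le x t) _ |>.trans
    (by gcongr; exacts [inv_nonneg.2 P.m_pos.le, P.dtgrad_bound x t])

theorem hess_predict_sub_self (h t : ℝ) (x : E) :
    P.hess x t (P.predict h t x - x) = -(h • P.dtgrad x t) := by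
  simp [predict, P.hess_hessInv_apply]

theorem norm_grad_predict_xstar_le {h : ℝ} (hh : 0 ≤ h) (t : ℝ) :
    ‖P.grad (P.predict h t (P.xstar t)) (t + h)‖ ≤
      h ^ 2 / 2 * (P.C1 * (P.C0 / P.m) ^ 2 + 2 * P.C2 * (P.C0 / P.m) + P.C3) := by
  set xs := P.xstar t
  set d := P.predict h t xs - xs
  have hx := norm_image_sub_sub_fderiv_le (fun z => P.hess_spec z (t + h))
    (P.norm_hess_sub_hess_space_le (t + h)) (P.predict h t xs) xs
  have hmixed : ‖(P.hess xs (t + h) - P.hess xs t) d‖ ≤ P.C2 * h * ‖d‖ :=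
    ((P.hess xs (t + h) - P.hess xs t).le_opNorm d).trans <| by
      gcongr
      simpa [abs_of_nonneg hh] using P.norm_hess_sub_hess_time_le xs (t + h) t
  have ht := norm_image_add_sub_sub_smul_deriv_le (P.dtgrad_spec xs)
    (P.norm_dtgrad_sub_dtgrad_time_le xs) t h
  have hgrad : P.grad (P.predict h t xs) (t + h) =
      (P.grad (P.predict h t xs) (t + h) - P.grad xs (t + h) - P.hess xs (t + h) d) +
      (P.hess xs (t + h) - P.hess xs t) d +
      (P.grad xs (t + h) - P.grad xs t - h • P.dtgrad xs t) := by
    rw [sub_apply, P.hess_predict_sub_self, P.xstar_grad]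
    abel
  have hd := P.norm_predict_sub_self_le hh t xs
  have := P.C1_nonneg
  have := P.C2_nonneg
  calc ‖P.grad (P.predict h t xs) (t + h)‖
      ≤ P.C1 / 2 * ‖d‖ ^ 2 + P.C2 * h * ‖d‖ + P.C3 / 2 * h ^ 2 := by
        rw [hgrad]
        exact norm_add₃_le.trans (add_le_add (add_le_add hx hmixed) ht)
    _ ≤ P.C1 / 2 * (h * (P.C0 / P.m)) ^ 2 + P.C2 * h * (h * (P.C0 / P.m)) + P.C3 / 2 * h ^ 2 := by
        gcongr
    _ = h ^ 2 / 2 * (P.C1 * (P.C0 / P.m) ^ 2 + 2 * P.C2 * (P.C0 / P.m) + P.C3) := by ring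

theorem norm_predict_xstar_sub_xstar_le {h : ℝ} (hh : 0 ≤ h) (t : ℝ) :
    ‖P.predict h t (P.xstar t) - P.xstar (t + h)‖ ≤
      h ^ 2 / 2 * (P.C0 ^ 2 * P.C1 / P.m ^ 3 + 2 * P.C0 * P.C2 / P.m ^ 2 + P.C3 / P.m) := by
  have hbound := (P.mul_norm_sub_xstar_le _ _).trans (P.norm_grad_predict_xstar_le hh t)
  rw [← le_div_iff₀' P.m_pos] at hbound
  refine hbound.trans_eq ?_
  have := P.m_pos.ne'
  field_simp

theorem correct_xstar (γ t : ℝ) : P.correct γ t (P.xstar t) = P.xstar t := by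
  simp [correct, P.xstar_grad]

theorem norm_iterate_correct_sub_xstar_le {γ : ℝ} (hγ : 0 ≤ γ) (t : ℝ) (τ : ℕ) (y : E) :
    ‖(P.correct γ t)^[τ] y - P.xstar t‖ ≤
      max |1 - γ * P.m| |1 - γ * P.L| ^ τ * ‖y - P.xstar t‖ := by
  have hρ : 0 ≤ max |1 - γ * P.m| |1 - γ * P.L| := (abs_nonneg _).trans (le_max_left _ _)
  have hlip : LipschitzWith (max |1 - γ * P.m| |1 - γ * P.L|).toNNReal (P.correct γ t) :=
    LipschitzWith.of_dist_le' fun a b => by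
      simpa only [dist_eq_norm, correct] using
        norm_sub_smul_sub_sub_smul_le (fun z => P.hess_spec z t) (P.hess_isSymmetric · t)
          (P.strong_convex · t) (P.hess_bound · t) hγ a b
  have hiter := (hlip.iterate τ).dist_le_mul y (P.xstar t)
  rwa [Function.iterate_fixed (P.correct_xstar γ t), dist_eq_norm, dist_eq_norm, NNReal.coe_pow,
    Real.coe_toNNReal _ hρ] at hiter

theorem norm_gtt_step_sub_xstar_le {h γ : ℝ} (hh : 0 ≤ h) (hγ : 0 ≤ γ) (τ : ℕ) (t : ℝ) (y : E) :
    ‖(P.correct γ (t + h))^[τ] (P.predict h t y) - P.xstar (t + h)‖ ≤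
      max |1 - γ * P.m| |1 - γ * P.L| ^ τ * (1 + h * (P.C0 * P.C1 / P.m ^ 2 + P.C2 / P.m)) *
          ‖y - P.xstar t‖ +
        max |1 - γ * P.m| |1 - γ * P.L| ^ τ * (h ^ 2 / 2) *
          (P.C0 ^ 2 * P.C1 / P.m ^ 3 + 2 * P.C0 * P.C2 / P.m ^ 2 + P.C3 / P.m) := by
  have hρ : 0 ≤ max |1 - γ * P.m| |1 - γ * P.L| := (abs_nonneg _).trans (le_max_left _ _)
  calc ‖(P.correct γ (t + h))^[τ] (P.predict h t y) - P.xstar (t + h)‖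
      ≤ max |1 - γ * P.m| |1 - γ * P.L| ^ τ * ‖P.predict h t y - P.xstar (t + h)‖ :=
        P.norm_iterate_correct_sub_xstar_le hγ _ τ _
    _ ≤ max |1 - γ * P.m| |1 - γ * P.L| ^ τ *
          ((1 + h * (P.C0 * P.C1 / P.m ^ 2 + P.C2 / P.m)) * ‖y - P.xstar t‖ +
            h ^ 2 / 2 * (P.C0 ^ 2 * P.C1 / P.m ^ 3 + 2 * P.C0 * P.C2 / P.m ^ 2 + P.C3 / P.m)) := by
        gcongr
        exact (norm_sub_le_norm_sub_add_norm_sub _ (P.predict h t (P.xstar t)) _).trans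
          (add_le_add (P.norm_predict_sub_predict_le hh t y _)
            (P.norm_predict_xstar_sub_xstar_le hh t))
    _ = _ := by ring

end TVOpt

theorem gtt_convergence_small_period_general (n : ℕ) (hn : 0 < n) (P : TVOpt n) (h : ℝ) (hh : 0 < h)
    (γ : ℝ) (τ : ℕ) (hγ0 : 0 < γ) (hγL : γ < 2 / P.L)
    (ρ : ℝ) (hρ : ρ = max |1 - γ * P.m| |1 - γ * P.L|)
    (σ : ℝ) (hσ : σ = 1 + h * (P.C0 * P.C1 / P.m ^ 2 + P.C2 / P.m))
    (hsmall : ρ ^ τ * σ < 1)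
    (x : ℕ → EuclideanSpace ℝ (Fin n))
    (hrec : ∀ k : ℕ, x (k + 1) =
      (fun y => y - γ • P.grad y (((k : ℝ) + 1) * h))^[τ]
        (x k - h • P.hessInv (x k) ((k : ℝ) * h) (P.dtgrad (x k) ((k : ℝ) * h)))) :
    ρ < 1 ∧ ∀ k : ℕ,
      ‖x k - P.xstar ((k : ℝ) * h)‖ ≤
        (ρ ^ τ * σ) ^ k * ‖x 0 - P.xstar 0‖ +
        ρ ^ τ * (h ^ 2 / 2) *
          (P.C0 ^ 2 * P.C1 / P.m ^ 3 + 2 * P.C0 * P.C2 / P.m ^ 2 + P.C3 / P.m) *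
          ((1 - (ρ ^ τ * σ) ^ k) / (1 - ρ ^ τ * σ)) := by
  have hρ0 : 0 ≤ ρ := hρ ▸ (abs_nonneg _).trans (le_max_left _ _)
  have hσ0 : 0 ≤ σ := by
    have := P.C0_nonneg; have := P.C1_nonneg; have := P.C2_nonneg; have := P.m_pos
    rw [hσ]; positivity
  refine ⟨hρ ▸ max_abs_one_sub_mul_lt_one P.m_pos (P.m_le_L hn) hγ0 hγL, fun k => ?_⟩
  have hstep (k : ℕ) : ‖x (k + 1) - P.xstar (((k + 1 : ℕ) : ℝ) * h)‖ ≤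
      ρ ^ τ * σ * ‖x k - P.xstar (k * h)‖ + ρ ^ τ * (h ^ 2 / 2) *
        (P.C0 ^ 2 * P.C1 / P.m ^ 3 + 2 * P.C0 * P.C2 / P.m ^ 2 + P.C3 / P.m) := by
    rw [hrec k, Nat.cast_succ, add_one_mul, hρ, hσ]
    exact P.norm_gtt_step_sub_xstar_le hh.le hγ0.le τ (k * h) (x k)
  have := le_pow_mul_add_geom_of_le_mul_add (e := fun k => ‖x k - P.xstar (k * h)‖)
    (mul_nonneg (pow_nonneg hρ0 τ) hσ0) hsmall.ne hstep k
  rwa [Nat.cast_zero, zero_mul] at this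

/-- **Theorem 1, part ii.** If moreover the sampling period is small
enough that `ρ^τ·σ < 1`, GTT converges exponentially up to an `O(h²)` error. -/
theorem gtt_convergence_small_period (n : ℕ) (hn : 0 < n) (P : TVOpt n) (h : ℝ) (hh : 0 < h)
    (γ : ℝ) (τ : ℕ) (hτ : 1 ≤ τ) (hγ0 : 0 < γ) (hγL : γ < 2 / P.L)
    (ρ : ℝ) (hρ : ρ = max |1 - γ * P.m| |1 - γ * P.L|)
    (σ : ℝ) (hσ : σ = 1 + h * (P.C0 * P.C1 / P.m ^ 2 + P.C2 / P.m))
    (hsmall : ρ ^ τ * σ < 1)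
    (x : ℕ → EuclideanSpace ℝ (Fin n))
    (hrec : ∀ k : ℕ, x (k + 1) =
      (fun y => y - γ • P.grad y (((k : ℝ) + 1) * h))^[τ]
        (x k - h • P.hessInv (x k) ((k : ℝ) * h) (P.dtgrad (x k) ((k : ℝ) * h)))) :
    ρ < 1 ∧ ∀ k : ℕ,
      ‖x k - P.xstar ((k : ℝ) * h)‖ ≤
        (ρ ^ τ * σ) ^ k * ‖x 0 - P.xstar 0‖ +
        ρ ^ τ * (h ^ 2 / 2) *
          (P.C0 ^ 2 * P.C1 / P.m ^ 3 + 2 * P.C0 * P.C2 / P.m ^ 2 + P.C3 / P.m) *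
          ((1 - (ρ ^ τ * σ) ^ k) / (1 - ρ ^ τ * σ)) :=
  gtt_convergence_small_period_general n hn P h hh γ τ hγ0 hγL ρ hρ σ hσ hsmall x hrec
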